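/- Under the still water condition h⁻ + b⁻ = h⁺ + b⁺ = C with h± ≥ 0, the left modified flux F̂^l = F̂(U*,⁻, U*,⁺) + (0, (g/2)((h⁻)² − (h*,⁻)²))^T has momentum component equal to (g/2)(h⁻)², and similarly the right modified flux F̂^r has momentum component (g/2)(h⁺)²; both have zero mass component. -/
import Mathlib


/-- The 1D shallow water flux in conserved variables `U = (h, m)` with `m = hu`:
`F(U) = (m, m²/h + g h²/2)` (with the convention `0²/0 = 0`). -/
noncomputable def swFlux (g : ℝ) (U : ℝ × ℝ) : ℝ × ℝ :=
  (U.2, U.2 ^ 2 / U.1 + g * U.1 ^ 2 / 2)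

/-- The Lax–Friedrichs numerical flux `F̂(U⁻,U⁺) = ½(F(U⁻)+F(U⁺)) − (α/2)(U⁺−U⁻)`. -/
noncomputable def laxFriedrichs (g α : ℝ) (Um Up : ℝ × ℝ) : ℝ × ℝ :=
  ((1 / 2 : ℝ)) • (swFlux g Um + swFlux g Up) - ((α / 2 : ℝ)) • (Up - Um)

/-- Under the still water condition `h⁻ + b⁻ = h⁺ + b⁺ = C` with
`h± ≥ 0` and `(hu)± = 0`, with hydrostatic reconstruction `b* = max(b⁻,b⁺)`,
`h*,± = max(0, h± + b± − b*)`, `U*,± = (h*,±, 0)`, the modified left flux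
`F̂ˡ = F̂(U*,⁻, U*,⁺) + (0, (g/2)((h⁻)² − (h*,⁻)²))ᵀ` has zero mass component
and momentum component `(g/2)(h⁻)²`; similarly the modified right flux
`F̂ʳ = F̂(U*,⁻, U*,⁺) + (0, (g/2)((h⁺)² − (h*,⁺)²))ᵀ` has zero mass component
and momentum component `(g/2)(h⁺)²`. -/
theorem modified_flux_still_water
    (g α hm hp bm bp C : ℝ) (hg : 0 < g) (hα : 0 ≤ α)
    (hhm : 0 ≤ hm) (hhp : 0 ≤ hp)
    (hsm : hm + bm = C) (hsp : hp + bp = C) :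
    let bstar := max bm bp
    let hstarm := max 0 (hm + bm - bstar)
    let hstarp := max 0 (hp + bp - bstar)
    let Fl := laxFriedrichs g α (hstarm, 0) (hstarp, 0)
      + (0, g / 2 * (hm ^ 2 - hstarm ^ 2))
    let Fr := laxFriedrichs g α (hstarm, 0) (hstarp, 0)
      + (0, g / 2 * (hp ^ 2 - hstarp ^ 2))
    Fl.1 = 0 ∧ Fl.2 = g / 2 * hm ^ 2 ∧ Fr.1 = 0 ∧ Fr.2 = g / 2 * hp ^ 2 := by
  intro bstar hstarm hstarp Fl Fr
  have heq : hstarm = hstarp := by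
    simp only [hstarm, hstarp, hsm, hsp]
  refine ⟨?_, ?_, ?_, ?_⟩ <;>
    simp only [Fl, Fr, laxFriedrichs, swFlux, heq, Prod.mk_add_mk, Prod.fst_add,
      Prod.snd_add, Prod.smul_mk, Prod.mk_sub_mk, smul_eq_mul] <;>
    ring_nf <;>
    simp <;> ring
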